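/- arXiv:1709.07343 — 4 statements merged into one kernel-verified Lean document; each statement's English description precedes it below -/
import Mathlib

section
/- Let X be a spectral space and S ⊆ X a pro-constructible subset. Then the closure of S in X equals the set of specializations of points of S, i.e. closure(S) = { x ∈ X : there exists s ∈ S with x ∈ closure({s}) }. -/
universe u v

/-- A spectral space: a quasicompact topological space with a basis of quasicompact open
subsets stable under finite intersection, in which every irreducible closed subset has a
unique generic point. -/
def IsSpectralSpace (X : Type u) [TopologicalSpace X] : Prop :=
  CompactSpace X ∧ T0Space X ∧ QuasiSober X ∧
    ∃ B : Set (Set X), TopologicalSpace.IsTopologicalBasis B ∧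
      (∀ U ∈ B, IsCompact U) ∧ ∀ U ∈ B, ∀ V ∈ B, U ∩ V ∈ B

/-- A subset is constructible if it lies in the Boolean algebra of subsets generated by the
quasicompact open subsets. -/
inductive IsConstructibleSet {X : Type u} [TopologicalSpace X] : Set X → Prop
  | qcOpen (U : Set X) : IsOpen U → IsCompact U → IsConstructibleSet U
  | compl (S : Set X) : IsConstructibleSet S → IsConstructibleSet Sᶜ
  | union (S T : Set X) : IsConstructibleSet S → IsConstructibleSet T →
      IsConstructibleSet (S ∪ T)

/-- A subset is pro-constructible if it is an intersection of constructible subsets. -/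
def IsProconstructible {X : Type u} [TopologicalSpace X] (S : Set X) : Prop :=
  ∃ 𝒮 : Set (Set X), (∀ T ∈ 𝒮, IsConstructibleSet T) ∧ S = ⋂₀ 𝒮

/-- Compactness of the constructible (patch) topology: any family of constructible sets in a
spectral space with the finite intersection property has nonempty intersection. -/
theorem patch_compact_aux {X : Type u} [TopologicalSpace X] (hX : IsSpectralSpace X)
    (𝒜 : Set (Set X)) (hA : ∀ A ∈ 𝒜, IsConstructibleSet A)
    (hFIP : ∀ t ⊆ 𝒜, t.Finite → (⋂₀ t).Nonempty) : (⋂₀ 𝒜).Nonempty := by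
  classical
  obtain ⟨hcomp, _ht0, hsober, B, hB, hBc, hBi⟩ := hX
  have hne : (Filter.generate 𝒜).NeBot :=
    Filter.generate_neBot_iff.2 fun t hts htf => hFIP t hts htf
  set F : Ultrafilter X := Ultrafilter.of (Filter.generate 𝒜) with hFdef
  have hF : ∀ A ∈ 𝒜, A ∈ F := fun A hAmem =>
    Ultrafilter.of_le (Filter.generate 𝒜) (Filter.GenerateSets.basic hAmem)
  -- the set of basic opens not in F
  set I : Set (Set X) := {U | U ∈ B ∧ U ∉ F} with hIdef
  set Z : Set X := (⋃₀ I)ᶜ with hZdef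
  have hZclosed : IsClosed Z := by
    rw [hZdef]
    exact (isOpen_sUnion fun U hU => hB.isOpen hU.1).isClosed_compl
  -- key compactness fact
  have key : ∀ W : Set X, IsCompact W → W ∈ F → (W ∩ Z).Nonempty := by
    intro W hWc hWF
    by_contra h
    rw [Set.not_nonempty_iff_eq_empty] at h
    have hcov : W ⊆ ⋃₀ I := by
      intro p hp
      by_contra hpn
      exact Set.eq_empty_iff_forall_notMem.1 h p ⟨hp, hpn⟩
    rw [Set.sUnion_eq_iUnion] at hcov
    obtain ⟨t, ht⟩ := hWc.elim_finite_subcover (fun U : I => (U : Set X))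
      (fun U => hB.isOpen U.2.1) hcov
    have hinter : (W ∩ ⋂ U ∈ t, ((U : Set X))ᶜ) ∈ F := by
      refine Filter.inter_mem hWF ?_
      refine (Filter.biInter_mem t.finite_toSet).2 fun U _ => ?_
      exact (Ultrafilter.compl_mem_iff_notMem).2 U.2.2
    obtain ⟨p, hpW, hpI⟩ := F.nonempty_of_mem hinter
    obtain ⟨U, hUt, hpU⟩ := Set.mem_iUnion₂.1 (ht hpW)
    exact (Set.mem_iInter₂.1 hpI U hUt) hpU
  have hZne : Z.Nonempty := by
    have := key Set.univ isCompact_univ Filter.univ_mem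
    rw [Set.univ_inter] at this; exact this
  -- basic opens meeting Z are exactly those in F
  have hmeet : ∀ U ∈ B, (U ∩ Z).Nonempty → U ∈ F := by
    intro U hUB hUZ
    by_contra hUF
    obtain ⟨p, hpU, hpZ⟩ := hUZ
    exact hpZ ⟨U, ⟨hUB, hUF⟩, hpU⟩
  have hZirr : IsIrreducible Z := by
    refine ⟨hZne, fun u v hu hv ⟨p, hpZ, hpu⟩ ⟨q, hqZ, hqv⟩ => ?_⟩
    obtain ⟨W₁, hW₁B, hpW₁, hW₁u⟩ := hB.exists_subset_of_mem_open hpu hu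
    obtain ⟨W₂, hW₂B, hqW₂, hW₂v⟩ := hB.exists_subset_of_mem_open hqv hv
    have h₁ : W₁ ∈ F := hmeet W₁ hW₁B ⟨p, hpW₁, hpZ⟩
    have h₂ : W₂ ∈ F := hmeet W₂ hW₂B ⟨q, hqW₂, hqZ⟩
    have h₁₂ : W₁ ∩ W₂ ∈ F := Filter.inter_mem h₁ h₂
    obtain ⟨r, hrW, hrZ⟩ := key (W₁ ∩ W₂) (hBc _ (hBi W₁ hW₁B W₂ hW₂B)) h₁₂
    exact ⟨r, hrZ, hW₁u hrW.1, hW₂v hrW.2⟩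
  obtain ⟨g, hg⟩ := hsober.sober hZirr hZclosed
  have hgZ : g ∈ Z := hg.mem
  -- constructible sets in F are exactly those containing g
  have main : ∀ C : Set X, IsConstructibleSet C → (C ∈ F ↔ g ∈ C) := by
    intro C hC
    induction hC with
    | qcOpen U hUo hUc =>
      constructor
      · intro hUF
        obtain ⟨p, hpU, hpZ⟩ := key U hUc hUF
        rw [← hg.def] at hpZ
        obtain ⟨q, hq, hq'⟩ := mem_closure_iff.1 hpZ U hUo hpU
        rwa [Set.mem_singleton_iff.1 hq'] at hq
      · intro hgU
        obtain ⟨W, hWB, hgW, hWU⟩ := hB.exists_subset_of_mem_open hgU hUo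
        exact Filter.mem_of_superset (hmeet W hWB ⟨g, hgW, hgZ⟩) hWU
    | compl T _ ih =>
      rw [Ultrafilter.compl_mem_iff_notMem, ih, Set.mem_compl_iff]
    | union T₁ T₂ _ _ ih₁ ih₂ =>
      rw [Ultrafilter.union_mem_iff, ih₁, ih₂, Set.mem_union]
  exact ⟨g, fun A hAmem => (main A (hA A hAmem)).1 (hF A hAmem)⟩

/-- Let `X` be a spectral space and `S ⊆ X` a pro-constructible subset. Then the closure of
`S` equals the set of specializations of points of `S`. -/
theorem closure_proconstructible_eq_specializations
    {X : Type u} [TopologicalSpace X] (hX : IsSpectralSpace X)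
    (S : Set X) (hS : IsProconstructible S) :
    closure S = {x : X | ∃ s ∈ S, x ∈ closure ({s} : Set X)} := by
  obtain ⟨𝒮, h𝒮, hSeq⟩ := hS
  ext x
  constructor
  · intro hx
    obtain ⟨_, _, _, B, hB, hBc, _⟩ := id hX
    set 𝒰 : Set (Set X) := {U | U ∈ B ∧ x ∈ U} with h𝒰def
    set 𝒜 : Set (Set X) := 𝒮 ∪ 𝒰 with h𝒜def
    have hA : ∀ A ∈ 𝒜, IsConstructibleSet A := by
      rintro A (hA | hA)
      · exact h𝒮 A hA
      · exact IsConstructibleSet.qcOpen A (hB.isOpen hA.1) (hBc A hA.1)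
    have hFIP : ∀ t ⊆ 𝒜, t.Finite → (⋂₀ t).Nonempty := by
      intro t hts htf
      set V : Set X := ⋂₀ (t ∩ 𝒰) with hVdef
      have hVopen : IsOpen V := by
        refine (htf.inter_of_left 𝒰).isOpen_sInter fun U hU => hB.isOpen hU.2.1
      have hxV : x ∈ V := fun U hU => hU.2.2
      obtain ⟨s, hsV, hsS⟩ := mem_closure_iff.1 hx V hVopen hxV
      refine ⟨s, fun A hAt => ?_⟩
      rcases hts hAt with hA𝒮 | hA𝒰
      · rw [hSeq] at hsS; exact hsS A hA𝒮
      · exact hsV A ⟨hAt, hA𝒰⟩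
    obtain ⟨g, hg⟩ := patch_compact_aux hX 𝒜 hA hFIP
    have hgS : g ∈ S := by
      rw [hSeq]; exact fun T hT => hg T (Or.inl hT)
    refine ⟨g, hgS, mem_closure_iff.2 fun o ho hxo => ?_⟩
    obtain ⟨W, hWB, hxW, hWo⟩ := hB.exists_subset_of_mem_open hxo ho
    exact ⟨g, hWo (hg W (Or.inr ⟨hWB, hxW⟩)), rfl⟩
  · rintro ⟨s, hsS, hxs⟩
    exact closure_mono (Set.singleton_subset_iff.2 hsS) hxs
end

section
/- Let f : Y → X be a surjective, generalizing, spectral map of spectral spaces. Then f is a quotient map: a subset U ⊆ X is open if and only if f⁻¹(U) is open in Y. -/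
universe u v

/-- A continuous map `f : X → Y` is generalizing if whenever `y ∈ Y` is a generalization of
`f x` (i.e. `f x` lies in the closure of `{y}`), there exists a generalization `x'` of `x`
(i.e. `x` lies in the closure of `{x'}`) with `f x' = y`. -/
def IsGeneralizing {X : Type u} {Y : Type v} [TopologicalSpace X] [TopologicalSpace Y]
    (f : X → Y) : Prop :=
  ∀ x : X, ∀ y : Y, f x ∈ closure ({y} : Set Y) →
    ∃ x' : X, x ∈ closure ({x'} : Set X) ∧ f x' = y

/-!
A closed subset `C` of a spectral space is quasi-compact in the constructible topology, in which
the preimages of quasi-compact opens under a spectral map are closed. So if `x` lies in the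
closure of `f '' C`, the sets `C ∩ f ⁻¹' V`, for `V` a quasi-compact open neighbourhood of `x`,
have a common point `y`, and `f y ⤳ x`; hence `f '' C` is closed as soon as it is stable under
specialization. If `f` is surjective and generalizing and `f ⁻¹' Z` is closed, then
`Zᶜ = f '' (f ⁻¹' Z)ᶜ` is the image of an open set, hence stable under generalization, and
`Z = f '' (f ⁻¹' Z)` is closed.
-/

open Topology TopologicalSpace

theorem IsSpectralSpace.spectralSpace {X : Type u} [TopologicalSpace X] (hX : IsSpectralSpace X) :
    SpectralSpace X := by
  obtain ⟨hcpt, hT0, hsober, B, hB, hBcpt, hBinter⟩ := hX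
  have hB' : IsTopologicalBasis (Set.range ((↑) : B → Set X)) := by rwa [Subtype.range_coe]
  exact
    { toPrespectralSpace := .of_isTopologicalBasis hB hBcpt
      toQuasiSeparatedSpace :=
        .of_isTopologicalBasis hB' fun U V ↦ hBcpt _ (hBinter _ U.2 _ V.2) }

theorem isGeneralizing_iff_generalizingMap {X : Type u} {Y : Type v} [TopologicalSpace X]
    [TopologicalSpace Y] {f : X → Y} : IsGeneralizing f ↔ GeneralizingMap f := by
  simp only [IsGeneralizing, GeneralizingMap, Relation.Fibration, specializes_iff_mem_closure]

section ConstructibleTopology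

variable {X : Type u} [TopologicalSpace X]

theorem constructibleTopology_le [PrespectralSpace X] :
    constructibleTopology X ≤ ‹TopologicalSpace X› := by
  intro U hU
  obtain ⟨S, hSB, rfl⟩ := PrespectralSpace.isTopologicalBasis.open_eq_sUnion hU
  exact (constructibleTopology X).isOpen_sUnion _ fun V hV ↦
    (hSB hV).2.isOpen_constructibleTopology_of_isOpen (hSB hV).1

theorem IsClosed.isCompact_withConstructibleTopology [CompactSpace X] [QuasiSober X]
    [PrespectralSpace X] [QuasiSeparatedSpace X] {C : Set X} (hC : IsClosed C) :
    IsCompact (WithTopology.ofTopology ⁻¹' C : Set (WithConstructibleTopology X)) :=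
  (hC.preimage (continuous_le_rng constructibleTopology_le
    (WithTopology.continuous_ofTopology _))).isCompact

theorem IsCompact.isClosed_withConstructibleTopology {U : Set X} (hc : IsCompact U)
    (ho : IsOpen U) :
    IsClosed (WithTopology.ofTopology ⁻¹' U : Set (WithConstructibleTopology X)) := by
  rw [WithConstructibleTopology.isClosed_iff]
  exact @IsClosed.mk X (constructibleTopology X) _ <|
    IsCompact.isOpen_constructibleTopology_of_isClosed (by rwa [compl_compl]) ho.isClosed_compl

end ConstructibleTopology

namespace IsSpectralMap

variable {Y : Type u} {X : Type v} [TopologicalSpace Y] [TopologicalSpace X]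
  [CompactSpace Y] [QuasiSober Y] [PrespectralSpace Y] [QuasiSeparatedSpace Y]
  [PrespectralSpace X] {f : Y → X}

theorem exists_specializes_of_mem_closure_image (hf : IsSpectralMap f) {C : Set Y}
    (hC : IsClosed C) {x : X} (hx : x ∈ closure (f '' C)) : ∃ y ∈ C, f y ⤳ x := by
  let V (W : {W : Set X // (IsOpen W ∧ IsCompact W) ∧ x ∈ W}) :
      Set (WithConstructibleTopology Y) :=
    WithTopology.ofTopology ⁻¹' (f ⁻¹' W)
  have hVclosed : ∀ i, IsClosed (V i) := fun ⟨W, ⟨hWo, hWc⟩, _⟩ ↦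
    (hf.isCompact_preimage_of_isOpen hWo hWc).isClosed_withConstructibleTopology
      (hWo.preimage hf.continuous)
  have hVfin (u : Finset _) : (WithTopology.ofTopology ⁻¹' C ∩ ⋂ i ∈ u, V i).Nonempty := by
    have hW : IsOpen (⋂ i ∈ u, i.1) := isOpen_biInter_finset fun i _ ↦ i.2.1.1
    have hxW : x ∈ ⋂ i ∈ u, i.1 := Set.mem_iInter₂.2 fun i _ ↦ i.2.2
    obtain ⟨_, hzW, y, hyC, rfl⟩ := mem_closure_iff.1 hx _ hW hxW
    exact ⟨WithTopology.toTopology _ y, hyC,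
      Set.mem_iInter₂.2 fun i hi ↦ Set.mem_iInter₂.1 hzW i hi⟩
  obtain ⟨y, hyC, hyV⟩ :=
    hC.isCompact_withConstructibleTopology.inter_iInter_nonempty V hVclosed hVfin
  refine ⟨y.ofTopology, hyC, specializes_iff_forall_open.2 fun U hU hxU ↦ ?_⟩
  obtain ⟨W, hW, hxW, hWU⟩ :=
    PrespectralSpace.isTopologicalBasis.exists_subset_of_mem_open hxU hU
  exact hWU (Set.mem_iInter.1 hyV ⟨W, hW, hxW⟩)

theorem isClosed_image_of_stableUnderSpecialization (hf : IsSpectralMap f) {C : Set Y}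
    (hC : IsClosed C) (hs : StableUnderSpecialization (f '' C)) : IsClosed (f '' C) :=
  closure_subset_iff_isClosed.1 fun _ hx ↦
    let ⟨y, hyC, hyx⟩ := hf.exists_specializes_of_mem_closure_image hC hx
    hs hyx ⟨y, hyC, rfl⟩

theorem isQuotientMap_of_generalizingMap (hf : IsSpectralMap f) (hsurj : Function.Surjective f)
    (hgen : GeneralizingMap f) : IsQuotientMap f := by
  refine isQuotientMap_iff_isClosed.2
    ⟨hsurj, fun Z ↦ ⟨fun hZ ↦ hZ.preimage hf.continuous, fun hZ ↦ ?_⟩⟩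
  have hZs : StableUnderSpecialization Z := by
    rw [← stableUnderGeneralization_compl_iff, ← Set.image_preimage_eq Zᶜ hsurj,
      Set.preimage_compl]
    exact hgen.stableUnderGeneralization_image hZ.isOpen_compl.stableUnderGeneralization
  rw [← Set.image_preimage_eq Z hsurj] at hZs ⊢
  exact hf.isClosed_image_of_stableUnderSpecialization hZ hZs

end IsSpectralMap

/-- A surjective, generalizing, spectral map of spectral spaces is a quotient map: a subset
`U ⊆ X` is open if and only if `f ⁻¹' U` is open. -/
theorem isOpen_iff_isOpen_preimage_of_surjective_generalizing_spectral
    {Y : Type u} {X : Type v} [TopologicalSpace Y] [TopologicalSpace X]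
    (hY : IsSpectralSpace Y) (hX : IsSpectralSpace X)
    (f : Y → X) (hf : IsSpectralMap f) (hsurj : Function.Surjective f)
    (hgen : IsGeneralizing f) :
    ∀ U : Set X, IsOpen U ↔ IsOpen (f ⁻¹' U) := by
  have := hY.spectralSpace
  have := hX.spectralSpace
  have hq := hf.isQuotientMap_of_generalizingMap hsurj (isGeneralizing_iff_generalizingMap.1 hgen)
  exact fun U ↦ hq.isOpen_preimage.symm
end

section
/- Let p be a prime number and let A be a perfect commutative ring of characteristic p (i.e. the Frobenius x ↦ x^p is bijective on A). Let ϖ ∈ A be a non-zero-divisor such that ⋂_{n ≥ 0} ϖⁿ·A = 0. Then for every Witt vector α ∈ W(A), the element ξ = p + [ϖ]·α is a non-zero-divisor in the ring W(A) of p-typical Witt vectors of A. -/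
/-!
Every Witt vector over a ring of characteristic `p` splits as `[x₀] + V y` with disjoint
coefficients, and `[a] * V y = V ([a ^ p] * y)`; hence `([a] * x)ₙ = a ^ (p ^ n) * xₙ`.
If `ξ * x = 0` then `p * x = V (F x)` is divisible by `[ϖ]`; comparing constant coefficients
and using that `V` is injective and `F` bijective (`A` is perfect) gives `x = [ϖ] * u` with
`ξ * u = 0`, because `[ϖ]` is again a non-zero-divisor. Iterating, `[ϖ] ^ k ∣ x` for every `k`,
so every coefficient of `x` lies in `⋂ₖ ϖᵏ A = 0`.
-/

namespace WittVector

variable {p : ℕ} [Fact p.Prime] {A : Type*} [CommRing A]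

local notation "𝕎" => WittVector p

theorem teichmuller_coeff_zero_add_verschiebung_shift (x : 𝕎 A) :
    teichmuller p (x.coeff 0) + verschiebung (x.shift 1) = x := by
  ext n
  rw [coeff_add_of_disjoint]
  · cases n with
    | zero => simp [teichmuller_coeff_zero, verschiebung_coeff_zero]
    | succ n =>
      rw [teichmuller_coeff_pos p _ _ n.succ_pos, verschiebung_coeff_succ, shift_coeff, zero_add,
        add_comm]
  · rintro (_ | n)
    · exact .inr (verschiebung_coeff_zero _)
    · exact .inl (teichmuller_coeff_pos p _ _ n.succ_pos)

section CharP

variable [CharP A p]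

theorem frobenius_teichmuller (a : A) :
    frobenius (teichmuller p a) = teichmuller p (a ^ p) := by
  rw [frobenius_eq_map_frobenius, map_teichmuller, frobenius_def]

theorem teichmuller_mul_verschiebung (a : A) (x : 𝕎 A) :
    teichmuller p a * verschiebung x = verschiebung (teichmuller p (a ^ p) * x) := by
  rw [← frobenius_teichmuller, mul_comm _ x, verschiebung_mul_frobenius, mul_comm]

theorem coeff_teichmuller_mul (a : A) (x : 𝕎 A) (n : ℕ) :
    (teichmuller p a * x).coeff n = a ^ p ^ n * x.coeff n := by
  induction n generalizing a x with
  | zero => simp [mul_coeff_zero, teichmuller_coeff_zero]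
  | succ n ih =>
    conv_lhs => rw [← teichmuller_coeff_zero_add_verschiebung_shift x]
    rw [mul_add, teichmuller_mul_verschiebung, ← map_mul, coeff_add_of_disjoint,
      teichmuller_coeff_pos p _ _ n.succ_pos, verschiebung_coeff_succ, ih, shift_coeff, zero_add,
      ← pow_mul, ← pow_succ', add_comm]
    rintro (_ | m)
    · exact .inr (verschiebung_coeff_zero _)
    · exact .inl (teichmuller_coeff_pos p _ _ m.succ_pos)

theorem teichmuller_mem_nonZeroDivisors {a : A} (ha : a ∈ nonZeroDivisors A) :
    teichmuller p a ∈ nonZeroDivisors (𝕎 A) := by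
  refine mem_nonZeroDivisors_iff_left.mpr fun x hx => ?_
  ext n
  have hn := congrArg (coeff · n) hx
  simp only [coeff_teichmuller_mul, zero_coeff] at hn ⊢
  exact mem_nonZeroDivisors_iff_left.mp (pow_mem ha _) _ hn

theorem coeff_mem_span_singleton_of_teichmuller_dvd {a : A} {x : 𝕎 A}
    (h : teichmuller p a ∣ x) (n : ℕ) : x.coeff n ∈ Ideal.span {a} := by
  obtain ⟨y, rfl⟩ := h
  rw [coeff_teichmuller_mul]
  refine Ideal.mul_mem_right _ _ (Ideal.pow_mem_of_mem _ (Ideal.mem_span_singleton_self a) _ ?_)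
  exact pow_pos (Fact.out : p.Prime).pos n

theorem teichmuller_dvd_of_dvd_natCast_mul [PerfectRing A p] {a : A}
    (ha : a ∈ nonZeroDivisors A) {x : 𝕎 A} (h : teichmuller p a ∣ p * x) :
    teichmuller p a ∣ x := by
  obtain ⟨y, hy⟩ := h
  have hy₀ : y.coeff 0 = 0 := by
    have h₀ := congrArg (coeff · 0) hy
    simp only [mul_coeff_zero, coeff_p_zero, teichmuller_coeff_zero, zero_mul] at h₀
    exact mem_nonZeroDivisors_iff_left.mp ha _ h₀.symm
  have hyV : verschiebung (y.shift 1) = y := by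
    simpa [hy₀, teichmuller_zero] using teichmuller_coeff_zero_add_verschiebung_shift y
  -- `V` is injective, and `V (F x) = p * x = [a] * V y' = V (y' * F [a])`
  have hF : frobenius x = frobenius (teichmuller p a) * y.shift 1 := by
    apply verschiebung_injective p A
    rw [verschiebung_frobenius, mul_comm x, hy, mul_comm (frobenius _), verschiebung_mul_frobenius,
      hyV, mul_comm]
  obtain ⟨u, hu⟩ := (frobenius_bijective p A).surjective (y.shift 1)
  exact ⟨u, (frobenius_bijective p A).injective (by rw [hF, ← hu, map_mul])⟩

theorem exists_eq_teichmuller_mul_of_mul_eq_zero [PerfectRing A p] {a : A}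
    (ha : a ∈ nonZeroDivisors A) (α : 𝕎 A) {x : 𝕎 A}
    (hx : ((p : 𝕎 A) + teichmuller p a * α) * x = 0) :
    ∃ u, ((p : 𝕎 A) + teichmuller p a * α) * u = 0 ∧ x = teichmuller p a * u := by
  have hdvd : teichmuller p a ∣ p * x := by
    rw [add_mul, add_eq_zero_iff_eq_neg] at hx
    exact ⟨-(α * x), by rw [hx, mul_assoc, mul_neg]⟩
  obtain ⟨u, rfl⟩ := teichmuller_dvd_of_dvd_natCast_mul ha hdvd
  have hnzd := teichmuller_mem_nonZeroDivisors (p := p) ha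
  have hu : ((p : 𝕎 A) + teichmuller p a * α) * u = 0 :=
    (mul_left_mem_nonZeroDivisors_eq_zero_iff hnzd).mp (by rw [mul_left_comm]; exact hx)
  exact ⟨u, hu, rfl⟩

theorem teichmuller_pow_dvd_of_mul_eq_zero [PerfectRing A p] {a : A}
    (ha : a ∈ nonZeroDivisors A) (α : 𝕎 A) {x : 𝕎 A}
    (hx : ((p : 𝕎 A) + teichmuller p a * α) * x = 0) (k : ℕ) : teichmuller p a ^ k ∣ x := by
  induction k generalizing x with
  | zero => simp
  | succ k ih =>
    obtain ⟨u, hu, rfl⟩ := exists_eq_teichmuller_mul_of_mul_eq_zero ha α hx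
    rw [pow_succ']
    exact mul_dvd_mul_left _ (ih hu)

end CharP

end WittVector

/-- Let `p` be a prime and `A` a perfect commutative ring of characteristic `p`. Let `ϖ ∈ A`
be a non-zero-divisor with `⋂ₙ ϖⁿ·A = 0`. Then for every Witt vector `α ∈ W(A)`, the element
`ξ = p + [ϖ]·α` is a non-zero-divisor in the ring of `p`-typical Witt vectors `W(A)`. -/
theorem wittVector_p_add_teichmuller_mul_mem_nonZeroDivisors
    (p : ℕ) [Fact p.Prime] (A : Type u) [CommRing A] [CharP A p]
    (hperf : Function.Bijective fun a : A => a ^ p)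
    (ϖ : A) (hϖ : ϖ ∈ nonZeroDivisors A)
    (hsep : (⨅ n : ℕ, Ideal.span {ϖ ^ n}) = (⊥ : Ideal A))
    (α : WittVector p A) :
    (p : WittVector p A) + WittVector.teichmuller p ϖ * α ∈
      nonZeroDivisors (WittVector p A) := by
  have : PerfectRing A p := ⟨hperf⟩
  refine mem_nonZeroDivisors_iff_left.mpr fun x hx => ?_
  ext n
  rw [WittVector.zero_coeff, ← Ideal.mem_bot, ← hsep, Ideal.mem_iInf]
  intro k
  refine WittVector.coeff_mem_span_singleton_of_teichmuller_dvd ?_ n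
  simpa only [map_pow] using WittVector.teichmuller_pow_dvd_of_mul_eq_zero hϖ α hx k
end

section
/- Let C be a complete nonarchimedean field of characteristic p that is algebraically closed, and let γ be a continuous ring automorphism of C such that for every x ∈ C the sequence of iterates γ^[n!](x) converges to x as n → ∞. Assume that γ acts trivially on C^×/(1 + C∘∘), i.e. |γ(x)/x − 1| < 1 for all x ∈ C^×. Then for every x ∈ C the sequence γ^[pⁿ](x) converges to x as n → ∞. -/
universe u

/-- Let `C` be a complete algebraically closed nonarchimedean field of characteristic `p`,
and let `γ` be a continuous ring automorphism of `C` such that `γ^[n!](x) → x` for every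
`x ∈ C`. If `γ` acts trivially on `C^× / (1 + C°°)`, i.e. `‖γ(x)/x − 1‖ < 1` for all
`x ≠ 0`, then `γ^[pⁿ](x) → x` for every `x ∈ C`. -/
theorem tendsto_iterate_pow_prime_of_trivial_on_units
    (p : ℕ) [Fact p.Prime] (C : Type u) [NontriviallyNormedField C]
    [IsUltrametricDist C] [CompleteSpace C] [CharP C p] [IsAlgClosed C]
    (γ : C ≃+* C) (hcont : Continuous γ)
    (hiter : ∀ x : C, Filter.Tendsto (fun n : ℕ => (⇑γ)^[n.factorial] x)
      Filter.atTop (nhds x))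
    (htriv : ∀ x : C, x ≠ 0 → ‖γ x / x - 1‖ < 1) :
    ∀ x : C, Filter.Tendsto (fun n : ℕ => (⇑γ)^[p ^ n] x) Filter.atTop (nhds x) := by
  have hp : p.Prime := Fact.out
  -- strict contraction of γ - 1
  have hlt : ∀ z : C, z ≠ 0 → ‖γ z - z‖ < ‖z‖ := by
    intro z hz
    have h := htriv z hz
    have he : γ z / z - 1 = (γ z - z) / z := by field_simp
    rw [he, norm_div, div_lt_one (norm_pos_iff.mpr hz)] at h
    exact h
  -- γ is an isometry
  have hiso : ∀ z : C, ‖γ z‖ = ‖z‖ := by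
    intro z
    rcases eq_or_ne z 0 with rfl | hz
    · simp
    · have h1 : ‖γ z‖ ≤ ‖z‖ := by
        calc ‖γ z‖ = ‖(γ z - z) + z‖ := by ring_nf
        _ ≤ max ‖γ z - z‖ ‖z‖ := IsUltrametricDist.norm_add_le_max _ _
        _ ≤ ‖z‖ := max_le (hlt z hz).le le_rfl
      have h2 : ‖z‖ ≤ max ‖z - γ z‖ ‖γ z‖ := by
        calc ‖z‖ = ‖(z - γ z) + γ z‖ := by ring_nf
        _ ≤ _ := IsUltrametricDist.norm_add_le_max _ _
      rcases max_cases ‖z - γ z‖ ‖γ z‖ with ⟨he, _⟩ | ⟨he, _⟩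
      · rw [he, norm_sub_rev] at h2
        exact absurd (lt_of_le_of_lt h2 (hlt z hz)) (lt_irrefl _)
      · rw [he] at h2; exact le_antisymm h1 h2
  -- iterates are additive and isometric
  have hsub : ∀ (k : ℕ) (a b : C), (⇑γ)^[k] (a - b) = (⇑γ)^[k] a - (⇑γ)^[k] b := by
    intro k
    induction k with
    | zero => simp
    | succ k ih =>
      intro a b
      rw [Function.iterate_succ_apply, Function.iterate_succ_apply,
        Function.iterate_succ_apply, map_sub, ih]
  have hisok : ∀ (k : ℕ) (z : C), ‖(⇑γ)^[k] z‖ = ‖z‖ := by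
    intro k
    induction k with
    | zero => simp
    | succ k ih => intro z; rw [Function.iterate_succ_apply, ih, hiso]
  -- telescoping: for σ = γ^[t], ‖σ^[k] z - z‖ ≤ ‖σ z - z‖
  have htel : ∀ (t k : ℕ) (z : C), ‖((⇑γ)^[t])^[k] z - z‖ ≤ ‖(⇑γ)^[t] z - z‖ := by
    intro t k
    induction k with
    | zero => intro z; simp
    | succ k ih =>
      intro z
      have key : ((⇑γ)^[t])^[k+1] z - z
          = (((⇑γ)^[t])^[k] ((⇑γ)^[t] z) - (⇑γ)^[t] z) + ((⇑γ)^[t] z - z) := by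
        rw [Function.iterate_succ_apply]; ring
      rw [key]
      refine le_trans (IsUltrametricDist.norm_add_le_max _ _) (max_le ?_ le_rfl)
      refine le_trans (ih ((⇑γ)^[t] z)) ?_
      have he : (⇑γ)^[t] ((⇑γ)^[t] z) - (⇑γ)^[t] z = (⇑γ)^[t] ((⇑γ)^[t] z - z) := by
        rw [hsub]
      rw [he, hisok]
  -- strict contraction for arbitrary iterates at nonzero points
  have hltk : ∀ (k : ℕ) (z : C), z ≠ 0 → ‖(⇑γ)^[k] z - z‖ < ‖z‖ := by
    intro k z hz
    have h := htel 1 k z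
    rw [Function.iterate_one] at h
    exact lt_of_le_of_lt h (hlt z hz)
  -- norm of cast of a number coprime to p is 1
  have hcast : ∀ m : ℕ, ¬ p ∣ m → ‖(m : C)‖ = 1 := by
    intro m hm
    have hne : (m : C) ≠ 0 := by
      rw [Ne, CharP.cast_eq_zero_iff C p m]; exact hm
    have hfrob : (m : C) ^ p = (m : C) := by
      have h1 : frobenius C p (m : C) = ((m : C)) ^ p := rfl
      rw [← h1, map_natCast]
    have hn1 : ‖(m : C)‖ ^ p = ‖(m : C)‖ := by
      rw [← norm_pow, hfrob]
    have hpos : (0:ℝ) < ‖(m : C)‖ := norm_pos_iff.mpr hne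
    by_contra hne1
    rcases lt_or_gt_of_ne hne1 with h | h
    · have : ‖(m : C)‖ ^ p < ‖(m : C)‖ ^ 1 := by
        exact pow_lt_pow_right_of_lt_one₀ hpos h hp.one_lt
      rw [pow_one, hn1] at this; exact lt_irrefl _ this
    · have : ‖(m : C)‖ ^ 1 < ‖(m : C)‖ ^ p := by
        exact pow_lt_pow_right₀ h hp.one_lt
      rw [pow_one, hn1] at this; exact lt_irrefl _ this
  -- main: fix x
  intro x
  set a : ℕ → ℝ := fun N => ‖(⇑γ)^[p ^ N] x - x‖ with ha
  -- monotone decreasing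
  have hmono : ∀ N, a (N + 1) ≤ a N := by
    intro N
    have : (⇑γ)^[p ^ (N+1)] x = ((⇑γ)^[p ^ N])^[p] x := by
      rw [← Function.iterate_mul, pow_succ]
    simp only [ha, this]
    exact htel (p ^ N) p x
  have hanti : Antitone a := antitone_nat_of_succ_le hmono
  -- key estimate
  have hkey : ∀ n : ℕ, a ((n.factorial).factorization p) ≤ ‖(⇑γ)^[n.factorial] x - x‖ := by
    intro n
    set F := n.factorial with hF
    have hF0 : F ≠ 0 := Nat.factorial_ne_zero n
    set N := F.factorization p with hN
    set m := F / p ^ N with hmm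
    have hmul : p ^ N * m = F := Nat.ordProj_mul_ordCompl_eq_self F p
    have hpm : ¬ p ∣ m := Nat.not_dvd_ordCompl hp hF0
    set τ := (⇑γ)^[p ^ N] with hτ
    set u := τ x - x with hu
    rcases eq_or_ne u 0 with hu0 | hu0
    · have hz : a N = 0 := by
        calc a N = ‖u‖ := rfl
        _ = 0 := by rw [hu0, norm_zero]
      rw [hz]; exact norm_nonneg _
    -- τ^[m] x - x = ∑ i in range m, τ^[i] u
    have hsum : ∀ M : ℕ, τ^[M] x - x = ∑ i ∈ Finset.range M, τ^[i] u := by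
      intro M
      induction M with
      | zero => simp
      | succ M ih =>
        rw [Finset.sum_range_succ, ← ih]
        have h1 : τ^[M] u = τ^[M+1] x - τ^[M] x := by
          rw [hu, hτ, ← Function.iterate_mul, ← Function.iterate_mul, hsub,
            ← Function.iterate_add_apply]
          have he : p ^ N * M + p ^ N = p ^ N * (M + 1) := by ring
          rw [he]
        rw [h1]; ring
    have hFx : (⇑γ)^[F] x = τ^[m] x := by
      rw [hτ, ← Function.iterate_mul, hmul]
    -- split the sum
    have hsplit : τ^[m] x - x = (m : C) * u + ∑ i ∈ Finset.range m, (τ^[i] u - u) := by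
      rw [hsum m, Finset.sum_sub_distrib]
      simp [Finset.sum_const, nsmul_eq_mul]
    -- the correction sum is strictly smaller than ‖u‖
    have hrest : ‖∑ i ∈ Finset.range m, (τ^[i] u - u)‖ ≤ ‖γ u - u‖ := by
      refine IsUltrametricDist.norm_sum_le_of_forall_le_of_nonneg (norm_nonneg _) ?_
      intro i _
      refine le_trans (htel (p ^ N) i u) ?_
      have := htel 1 (p ^ N) u
      rw [Function.iterate_one] at this
      exact this
    have hrest' : ‖∑ i ∈ Finset.range m, (τ^[i] u - u)‖ < ‖u‖ :=
      lt_of_le_of_lt hrest (hlt u hu0)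
    have hmu : ‖(m : C) * u‖ = ‖u‖ := by
      rw [norm_mul, hcast m hpm, one_mul]
    -- conclude
    have hfinal : ‖u‖ ≤ ‖τ^[m] x - x‖ := by
      have h1 : (m : C) * u = (τ^[m] x - x) - ∑ i ∈ Finset.range m, (τ^[i] u - u) := by
        rw [hsplit]; ring
      have h2 : ‖u‖ ≤ max ‖τ^[m] x - x‖ ‖∑ i ∈ Finset.range m, (τ^[i] u - u)‖ := by
        rw [← hmu, h1, sub_eq_add_neg]
        refine le_trans (IsUltrametricDist.norm_add_le_max _ _) ?_
        rw [norm_neg]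
      rcases max_cases ‖τ^[m] x - x‖ ‖∑ i ∈ Finset.range m, (τ^[i] u - u)‖ with
        ⟨he, _⟩ | ⟨he, _⟩
      · rwa [he] at h2
      · rw [he] at h2; exact absurd (lt_of_le_of_lt h2 hrest') (lt_irrefl _)
    calc a N = ‖u‖ := by rw [ha]
    _ ≤ ‖τ^[m] x - x‖ := hfinal
    _ = ‖(⇑γ)^[F] x - x‖ := by rw [hFx]
  -- assemble
  rw [Metric.tendsto_atTop]
  intro ε hε
  have hx := Metric.tendsto_atTop.mp (hiter x) ε hε
  obtain ⟨n₁, hn₁⟩ := hx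
  refine ⟨(n₁.factorial).factorization p, fun N hN => ?_⟩
  have h1 : a N ≤ a ((n₁.factorial).factorization p) := hanti hN
  have h2 := hkey n₁
  have h3 := hn₁ n₁ le_rfl
  rw [dist_eq_norm] at h3 ⊢
  calc ‖(⇑γ)^[p ^ N] x - x‖ = a N := rfl
  _ ≤ a ((n₁.factorial).factorization p) := h1
  _ ≤ ‖(⇑γ)^[n₁.factorial] x - x‖ := h2
  _ < ε := h3
end
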